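/- arXiv:1608.02840 — 8 statements merged into one kernel-verified Lean document; each statement's English description precedes it below -/
import Mathlib

section
/- If z = r e^{iθ} with r > 1 and θ ∈ (-π/2, π/2), and μ : [0,1] → ℝ is continuous, nonnegative, and satisfies μ(α) ≥ c > 0 on (β₀, β) ⊂ (0,1), then |∫₀¹ μ(α) z^α dα| ≥ c·cos(βπ/2)·(r^β - r^{β₀})/ln r. -/
/-!
Bound the norm of the integral below by its real part, `∫ μ(α) r^α cos(αθ) dα`. Since
`|αθ| < π/2` on `[0, 1]` this integrand is nonnegative, so dropping everything outside
`(β₀, β)` only decreases the integral; there `μ ≥ c` and `cos(αθ) ≥ cos(βπ/2)`, and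
`∫_{β₀}^{β} r^α dα = (r^β - r^{β₀}) / ln r`.
-/

open Real Set MeasureTheory intervalIntegral

theorem Real.cos_le_cos_of_abs_le {x y : ℝ} (hxy : |x| ≤ y) (hy : y ≤ π) :
    cos y ≤ cos x := by
  rw [← cos_abs x]
  exact cos_le_cos_of_nonneg_of_le_pi (abs_nonneg x) hy hxy

theorem Real.cos_mul_pi_div_two_le_cos_mul {α β θ : ℝ} (hα : |α| ≤ β) (hβ : β ≤ 2)
    (hθ : |θ| ≤ π / 2) : cos (β * π / 2) ≤ cos (α * θ) := by
  refine cos_le_cos_of_abs_le ?_ (by nlinarith [pi_pos])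
  calc |α * θ| = |α| * |θ| := abs_mul α θ
    _ ≤ β * (π / 2) := mul_le_mul hα hθ (abs_nonneg θ) ((abs_nonneg α).trans hα)
    _ = β * π / 2 := by ring

theorem Real.integral_exp_mul_right {a b L : ℝ} (hL : L ≠ 0) :
    ∫ x in a..b, exp (x * L) = (exp (b * L) - exp (a * L)) / L := by
  rw [integral_comp_mul_right exp hL, integral_exp, smul_eq_mul]
  field_simp

theorem Complex.re_ofReal_mul_exp_mul (m α L θ : ℝ) :
    ((m : ℂ) * Complex.exp (α * (L + θ * Complex.I))).re =
      m * (Real.exp (α * L) * Real.cos (α * θ)) := by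
  rw [Complex.re_ofReal_mul, Complex.exp_re]
  simp

section RealPart

variable {m α L θ : ℝ}

theorem mul_exp_mul_mul_cos_nonneg (hm : 0 ≤ m) (hα : |α| ≤ 1) (hθ : |θ| ≤ π / 2) :
    0 ≤ m * (exp (α * L) * cos (α * θ)) := by
  have hcos := cos_mul_pi_div_two_le_cos_mul hα one_le_two hθ
  rw [one_mul, cos_pi_div_two] at hcos
  exact mul_nonneg hm (mul_nonneg (exp_nonneg _) hcos)

theorem mul_cos_mul_exp_le_mul_exp_mul_mul_cos {c β : ℝ} (hcm : c ≤ m) (hm : 0 ≤ m)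
    (hα : |α| ≤ β) (hβ : β ≤ 1) (hθ : |θ| ≤ π / 2) :
    c * cos (β * π / 2) * exp (α * L) ≤ m * (exp (α * L) * cos (α * θ)) := by
  have hcos := cos_mul_pi_div_two_le_cos_mul hα (by linarith) hθ
  have hcosβ : 0 ≤ cos (β * π / 2) := by
    have hβ0 : 0 ≤ β := (abs_nonneg α).trans hα
    exact cos_nonneg_of_mem_Icc ⟨by nlinarith [pi_pos], by nlinarith [pi_pos]⟩
  calc c * cos (β * π / 2) * exp (α * L) ≤ m * cos (α * θ) * exp (α * L) := by gcongr
    _ = m * (exp (α * L) * cos (α * θ)) := by ring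

end RealPart

theorem intervalIntegral.integral_re_le_norm {f : ℝ → ℂ} {a b : ℝ}
    (hf : IntervalIntegrable f volume a b) :
    ∫ x in a..b, (f x).re ≤ ‖∫ x in a..b, f x‖ :=
  (intervalIntegral_re hf).trans_le (Complex.re_le_norm _)

theorem stmt_4_general (μ : ℝ → ℝ) (c β₀ β r θ : ℝ)
    (hμc : ContinuousOn μ (Set.Icc 0 1))
    (hμ0 : ∀ α ∈ Set.Icc (0:ℝ) 1, 0 ≤ μ α)
    (hβ₀ : 0 < β₀) (hββ : β₀ < β) (hβ : β < 1)
    (hlow : ∀ α ∈ Set.Ioo β₀ β, c ≤ μ α)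
    (hr : 1 < r) (hθ : |θ| < Real.pi / 2) :
    c * Real.cos (β * Real.pi / 2) *
        (Real.exp (β * Real.log r) - Real.exp (β₀ * Real.log r)) / Real.log r
      ≤ ‖∫ α in (0:ℝ)..1,
          (μ α : ℂ) * Complex.exp (α * (Real.log r + θ * Complex.I))‖ := by
  set L := log r
  set f : ℝ → ℝ := fun α => μ α * (exp (α * L) * cos (α * θ))
  have hf : ContinuousOn f (Icc 0 1) := hμc.mul (by fun_prop)
  have hsub : Icc β₀ β ⊆ Icc 0 1 := Icc_subset_Icc hβ₀.le hβ.le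
  have hf_nonneg : ∀ α ∈ Icc (0:ℝ) 1, 0 ≤ f α := fun α hα =>
    mul_exp_mul_mul_cos_nonneg (hμ0 α hα) (abs_le.2 ⟨by linarith [hα.1], hα.2⟩) hθ.le
  have hf_lower : ∀ α ∈ Ioo β₀ β, c * cos (β * π / 2) * exp (α * L) ≤ f α :=
    fun α hα =>
    mul_cos_mul_exp_le_mul_exp_mul_mul_cos (hlow α hα) (hμ0 α (hsub (Ioo_subset_Icc_self hα)))
        (abs_le.2 ⟨by linarith [hα.1], hα.2.le⟩) hβ.le hθ.le
  calc c * cos (β * π / 2) * (exp (β * L) - exp (β₀ * L)) / L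
      = ∫ α in β₀..β, c * cos (β * π / 2) * exp (α * L) := by
        rw [intervalIntegral.integral_const_mul, integral_exp_mul_right (log_pos hr).ne',
          mul_div_assoc]
    _ ≤ ∫ α in β₀..β, f α :=
        integral_mono_on_of_le_Ioo hββ.le ((by fun_prop : Continuous _).intervalIntegrable _ _)
          ((hf.mono hsub).intervalIntegrable_of_Icc hββ.le) hf_lower
    _ ≤ ∫ α in (0:ℝ)..1, f α :=
        integral_mono_interval hβ₀.le hββ.le hβ.le
          (ae_restrict_of_forall_mem measurableSet_Ioc fun α hα =>
            hf_nonneg α (Ioc_subset_Icc_self hα))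
          (hf.intervalIntegrable_of_Icc zero_le_one)
    _ = ∫ α in (0:ℝ)..1, ((μ α : ℂ) * Complex.exp (α * (L + θ * Complex.I))).re := by
        simp only [Complex.re_ofReal_mul_exp_mul, f]
    _ ≤ _ := integral_re_le_norm <|
        ContinuousOn.intervalIntegrable_of_Icc zero_le_one (by fun_prop)

theorem stmt_4 (μ : ℝ → ℝ) (c β₀ β r θ : ℝ)
    (hμc : ContinuousOn μ (Set.Icc 0 1))
    (hμ0 : ∀ α ∈ Set.Icc (0:ℝ) 1, 0 ≤ μ α)
    (hβ₀ : 0 < β₀) (hββ : β₀ < β) (hβ : β < 1) (hc : 0 < c)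
    (hlow : ∀ α ∈ Set.Ioo β₀ β, c ≤ μ α)
    (hr : 1 < r) (hθ : |θ| < Real.pi / 2) :
    c * Real.cos (β * Real.pi / 2) *
        (Real.exp (β * Real.log r) - Real.exp (β₀ * Real.log r)) / Real.log r
      ≤ ‖∫ α in (0:ℝ)..1,
          (μ α : ℂ) * Complex.exp (α * (Real.log r + θ * Complex.I))‖ :=
  stmt_4_general μ c β₀ β r θ hμc hμ0 hβ₀ hββ hβ hlow hr hθ
end

section
/- The function x ↦ (x^β - x^{β₀})/ln x is strictly increasing on the interval (e^{1/β}, ∞) whenever 0 < β₀ < β < 1. -/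
/-!
Substituting `t = log x`, the function becomes `g t = (exp (β t) - exp (β₀ t)) / t` on
`t > 1 / β`, and `log` is increasing, so it suffices that `g' > 0` there. The numerator of `g'`
is `h (β t) - h (β₀ t)` with `h s = (s - 1) exp s`; since `β t > 1`, `h (β t) > 0`, which beats
`h (β₀ t)` both when `β₀ t ≤ 1` (then `h (β₀ t) ≤ 0`) and when `β₀ t > 1` (both factors of `h`
grow).
-/

open Real Set

theorem sub_one_mul_exp_lt_sub_one_mul_exp {a b : ℝ} (hab : a < b) (hb : 1 < b) :
    (a - 1) * exp a < (b - 1) * exp b := by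
  have hb_pos : 0 < (b - 1) * exp b := mul_pos (by linarith) (exp_pos b)
  rcases le_or_gt a 1 with ha | ha
  · exact (mul_nonpos_of_nonpos_of_nonneg (by linarith) (exp_pos a).le).trans_lt hb_pos
  · exact mul_lt_mul'' (by linarith) (exp_lt_exp.mpr hab) (by linarith) (exp_pos a).le

theorem hasDerivAt_exp_mul_sub_exp_mul_div (a b : ℝ) {t : ℝ} (ht : t ≠ 0) :
    HasDerivAt (fun t => (exp (b * t) - exp (a * t)) / t)
      (((b * t - 1) * exp (b * t) - (a * t - 1) * exp (a * t)) / t ^ 2) t := by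
  have hexp (c : ℝ) : HasDerivAt (fun t => exp (c * t)) (exp (c * t) * c) t :=
    (hasDerivAt_exp _).comp t ((hasDerivAt_id t).const_mul c |>.congr_deriv (mul_one c))
  refine ((hexp b).sub (hexp a) |>.div (hasDerivAt_id t) ht).congr_deriv ?_
  simp only [Pi.sub_apply, id]
  field_simp
  ring

theorem strictMonoOn_exp_mul_sub_exp_mul_div {β₀ β : ℝ} (hβ : 0 < β) (hββ : β₀ < β) :
    StrictMonoOn (fun t => (exp (β * t) - exp (β₀ * t)) / t) (Ioi (1 / β)) := by
  have hderiv (t : ℝ) (ht : t ∈ Ioi (1 / β)) :=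
    hasDerivAt_exp_mul_sub_exp_mul_div β₀ β (ne_of_gt (lt_trans (by positivity) ht))
  refine strictMonoOn_of_deriv_pos (convex_Ioi _)
    (fun t ht => (hderiv t ht).continuousAt.continuousWithinAt) fun t ht => ?_
  rw [interior_Ioi] at ht
  have ht_pos : 0 < t := lt_trans (by positivity) ht
  have hβt : 1 < β * t := by rwa [mem_Ioi, div_lt_iff₀' hβ] at ht
  rw [(hderiv t ht).deriv]
  exact div_pos (sub_pos.mpr (sub_one_mul_exp_lt_sub_one_mul_exp
    (mul_lt_mul_of_pos_right hββ ht_pos) hβt)) (by positivity)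

theorem stmt_5_general (β₀ β : ℝ) (hβ₀ : 0 < β₀) (hββ : β₀ < β) :
    StrictMonoOn (fun x : ℝ =>
        (Real.exp (β * Real.log x) - Real.exp (β₀ * Real.log x)) / Real.log x)
      (Set.Ioi (Real.exp (1 / β))) := by
  have hlog : StrictMonoOn log (Ioi (exp (1 / β))) :=
    strictMonoOn_log.mono fun x hx => (exp_pos _).trans hx
  have hmaps : MapsTo log (Ioi (exp (1 / β))) (Ioi (1 / β)) := fun x hx =>
    (lt_log_iff_exp_lt ((exp_pos _).trans hx)).mpr hx
  exact (strictMonoOn_exp_mul_sub_exp_mul_div (hβ₀.trans hββ) hββ).comp hlog hmaps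

theorem stmt_5 (β₀ β : ℝ) (hβ₀ : 0 < β₀) (hββ : β₀ < β) (hβ : β < 1) :
    StrictMonoOn (fun x : ℝ =>
        (Real.exp (β * Real.log x) - Real.exp (β₀ * Real.log x)) / Real.log x)
      (Set.Ioi (Real.exp (1 / β))) :=
  stmt_5_general β₀ β hβ₀ hββ
end

section
/- For fixed x₀ ∈ (0,1), the function F(y) = (e^{(x₀-2)y} - e^{-x₀ y})/(2(1 - e^{-2y})) is strictly increasing on the interval ((ln(2-x₀) - ln x₀)/(2(1-x₀)), ∞). -/
/-!
Multiplying numerator and denominator by `exp y` turns the function into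
`-sinh ((1 - x₀) y) / (2 sinh y)`, so it suffices that `y ↦ sinh (a y) / sinh y` is strictly
decreasing on `(0, ∞)` for `0 < a < 1`. The sign of its derivative is that of
`(1 + a) sinh ((1 - a) y) - (1 - a) sinh ((1 + a) y)`, which is negative because `sinh t / t`
is strictly increasing on `(0, ∞)`, by strict convexity of `sinh` on `[0, ∞)`.
-/

open Real Set

lemma strictConvexOn_sinh : StrictConvexOn ℝ (Ici 0) sinh := by
  refine StrictMonoOn.strictConvexOn_of_deriv (convex_Ici 0) continuous_sinh.continuousOn ?_
  rw [Real.deriv_sinh, interior_Ici]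
  exact cosh_strictMonoOn.mono Ioi_subset_Ici_self

lemma sinh_div_self_strictMonoOn : StrictMonoOn (fun t => sinh t / t) (Ioi 0) := by
  intro s hs t ht hst
  simpa using strictConvexOn_sinh.secant_strict_mono self_mem_Ici (mem_Ici.2 hs.le)
    (mem_Ici.2 ht.le) (ne_of_gt hs) (ne_of_gt ht) hst

lemma mul_cosh_mul_sinh_lt_sinh_mul_cosh {a y : ℝ} (ha0 : 0 < a) (ha1 : a < 1) (hy : 0 < y) :
    a * cosh (a * y) * sinh y < sinh (a * y) * cosh y := by
  have hslope := sinh_div_self_strictMonoOn (mem_Ioi.2 (by positivity : 0 < (1 - a) * y))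
    (mem_Ioi.2 (by positivity : 0 < (1 + a) * y)) (by nlinarith)
  rw [div_lt_div_iff₀ (by nlinarith) (by nlinarith)] at hslope
  have hsum : sinh ((1 + a) * y) = sinh y * cosh (a * y) + cosh y * sinh (a * y) := by
    rw [← sinh_add]; ring_nf
  have hdiff : sinh ((1 - a) * y) = sinh y * cosh (a * y) - cosh y * sinh (a * y) := by
    rw [← sinh_sub]; ring_nf
  rw [hsum, hdiff] at hslope
  nlinarith

lemma sinh_mul_div_sinh_strictAntiOn {a : ℝ} (ha0 : 0 < a) (ha1 : a < 1) :
    StrictAntiOn (fun y => sinh (a * y) / sinh y) (Ioi 0) := by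
  have hsinh : ∀ y ∈ Ioi (0 : ℝ), sinh y ≠ 0 := fun y hy => ne_of_gt (sinh_pos_iff.2 hy)
  refine strictAntiOn_of_deriv_neg (convex_Ioi 0) (by fun_prop (disch := exact hsinh)) ?_
  intro y hy
  rw [interior_Ioi] at hy
  have hderiv : HasDerivAt (fun y => sinh (a * y) / sinh y)
      ((cosh (a * y) * a * sinh y - sinh (a * y) * cosh y) / sinh y ^ 2) y :=
    (((hasDerivAt_id y).const_mul a).sinh.div (hasDerivAt_sinh y) (hsinh y hy)).congr_deriv
      (by simp [mul_comm])
  rw [hderiv.deriv]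
  refine div_neg_of_neg_of_pos ?_ (pow_pos (sinh_pos_iff.2 hy) 2)
  linarith [mul_cosh_mul_sinh_lt_sinh_mul_cosh ha0 ha1 hy]

lemma exp_sub_exp_div_eq_neg_sinh_div_sinh (x y : ℝ) :
    (exp ((x - 2) * y) - exp (-x * y)) / (2 * (1 - exp (-2 * y))) =
      -(sinh ((1 - x) * y) / sinh y) / 2 := by
  have hnum : exp ((x - 2) * y) - exp (-x * y) =
      exp (-y) * -(exp ((1 - x) * y) - exp (-((1 - x) * y))) := by
    rw [mul_neg, mul_sub, ← exp_add, ← exp_add]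
    ring_nf
  have hden : 2 * (1 - exp (-2 * y)) = exp (-y) * (2 * (exp y - exp (-y))) := by
    rw [mul_left_comm, mul_sub (exp (-y)), ← exp_add, ← exp_add, neg_add_cancel, exp_zero]
    ring_nf
  rw [hnum, hden, mul_div_mul_left _ _ (exp_pos _).ne', sinh_eq, sinh_eq,
    div_div_div_cancel_right₀ two_ne_zero, neg_div, neg_div, div_div, mul_comm 2]

theorem stmt_6 (x₀ : ℝ) (hx₀ : x₀ ∈ Set.Ioo (0:ℝ) 1) :
    StrictMonoOn (fun y : ℝ =>
        (Real.exp ((x₀ - 2) * y) - Real.exp (-x₀ * y)) / (2 * (1 - Real.exp (-2 * y))))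
      (Set.Ioi ((Real.log (2 - x₀) - Real.log x₀) / (2 * (1 - x₀)))) := by
  obtain ⟨hx0, hx1⟩ := hx₀
  have hy₀ : 0 ≤ (log (2 - x₀) - log x₀) / (2 * (1 - x₀)) :=
    div_nonneg (sub_nonneg.2 (log_le_log hx0 (by linarith))) (by linarith)
  have hmono : StrictMonoOn (fun y => -(sinh ((1 - x₀) * y) / sinh y) / 2) (Ioi 0) :=
    fun s hs t ht hst => by
      have := sinh_mul_div_sinh_strictAntiOn (a := 1 - x₀) (by linarith) (by linarith) hs ht hst
      dsimp only
      linarith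
  simp_rw [exp_sub_exp_div_eq_neg_sinh_div_sinh]
  exact hmono.mono (Ioi_subset_Ioi hy₀)
end

section
/- For fixed x⋆ ∈ (0,1] and y > 1/x⋆, the expression ((x⋆-2)y+1)e^{(x⋆-2)y} + (1-x⋆y)e^{-x⋆y} + (-x⋆y-1)e^{(x⋆-4)y} + ((x⋆-2)y-1)e^{(-x⋆-2)y} is strictly negative. -/
theorem stmt_9 (x y : ℝ) (hx : x ∈ Set.Ioc (0:ℝ) 1) (hy : 1 / x < y) :
    ((x - 2) * y + 1) * Real.exp ((x - 2) * y) + (1 - x * y) * Real.exp (-x * y)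
      + (-(x * y) - 1) * Real.exp ((x - 4) * y)
      + ((x - 2) * y - 1) * Real.exp ((-x - 2) * y) < 0 := by
  obtain ⟨hx0, hx1⟩ := hx
  have hinv : (1:ℝ) ≤ 1 / x := (le_div_iff₀ hx0).mpr (by linarith)
  have hy1 : 1 < y := lt_of_le_of_lt hinv hy
  have hxy : 1 < x * y := by
    rw [div_lt_iff₀ hx0] at hy; nlinarith
  have h1 : (x - 2) * y + 1 < 0 := by nlinarith
  have h2 : (1 : ℝ) - x * y < 0 := by linarith
  have h3 : -(x * y) - 1 < 0 := by linarith
  have h4 : (x - 2) * y - 1 < 0 := by linarith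
  have e1 := Real.exp_pos ((x - 2) * y)
  have e2 := Real.exp_pos (-x * y)
  have e3 := Real.exp_pos ((x - 4) * y)
  have e4 := Real.exp_pos ((-x - 2) * y)
  nlinarith [mul_neg_of_neg_of_pos h1 e1, mul_neg_of_neg_of_pos h2 e2,
    mul_neg_of_neg_of_pos h3 e3, mul_neg_of_neg_of_pos h4 e4]
end

section
/- For every positive integer r, the linear span of the functions x ↦ (n·r)^x, for n ranging over the positive integers, is dense in L²[0,1]. -/
/-!
Write `f_n(x) = (n r)^x` on `[0,1]`. Since `f_n f_m = f_{n m r}`, the constants together with the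
`f_n` span a subalgebra of `C([0,1], ℝ)`; it separates points (`f_2` is injective), so it is
uniformly dense by Stone–Weierstrass. Multiplying by the nowhere-vanishing `f_1` is a
surjective continuous linear map of `C([0,1], ℝ)` sending this subalgebra into the span of the
`f_n`, which is therefore uniformly dense as well. As continuous functions are dense in `L²[0,1]`
and uniform distance dominates `L²` distance on a probability space, the span is dense in `L²`.
-/

open MeasureTheory Set

noncomputable def rpowNatMul (r n : ℕ+) : C(Icc (0:ℝ) 1, ℝ) :=
  ⟨fun x => Real.exp (x * Real.log (n * r)), by fun_prop⟩

lemma rpowNatMul_apply (r n : ℕ+) (x : Icc (0:ℝ) 1) :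
    rpowNatMul r n x = Real.exp (x * Real.log (n * r)) := rfl

lemma rpowNatMul_mul (r n m : ℕ+) :
    rpowNatMul r n * rpowNatMul r m = rpowNatMul r (n * m * r) := by
  ext x
  simp only [ContinuousMap.mul_apply, rpowNatMul_apply, ← Real.exp_add, ← mul_add,
    ← Real.log_mul (by positivity : ((n:ℝ) * r) ≠ 0) (by positivity : ((m:ℝ) * r) ≠ 0)]
  push_cast
  ring_nf

lemma Submodule.exists_fin_sum_eq_of_mem_span_range {R M ι : Type*} [Semiring R]
    [AddCommMonoid M] [Module R M] {v : ι → M} {m : M} (hm : m ∈ span R (range v)) :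
    ∃ (k : ℕ) (c : Fin k → R) (n : Fin k → ι), ∑ i, c i • v (n i) = m := by
  obtain ⟨k, c, g, rfl⟩ := mem_span_set'.1 hm
  choose n hn using fun i => (g i).2
  exact ⟨k, c, n, by simp only [hn]⟩

lemma closure_range_rpowNatMul_subset (r : ℕ+) :
    (Submonoid.closure (range (rpowNatMul r)) : Set _) ⊆ insert 1 (range (rpowNatMul r)) := by
  intro f hf
  induction hf using Submonoid.closure_induction with
  | mem f hf => exact mem_insert_of_mem _ hf
  | one => exact mem_insert _ _
  | mul f g _ _ hf hg =>
    rcases hf with rfl | ⟨n, rfl⟩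
    · simpa using hg
    rcases hg with rfl | ⟨m, rfl⟩
    · simp
    exact mem_insert_of_mem _ ⟨n * m * r, (rpowNatMul_mul r n m).symm⟩

lemma rpowNatMul_one_mul_mem_span {r : ℕ+} {f : C(Icc (0:ℝ) 1, ℝ)}
    (hf : f ∈ Algebra.adjoin ℝ (range (rpowNatMul r))) :
    rpowNatMul r 1 * f ∈ Submodule.span ℝ (range (rpowNatMul r)) := by
  rw [← Subalgebra.mem_toSubmodule, Algebra.adjoin_eq_span] at hf
  induction hf using Submodule.span_induction with
  | mem f hf =>
    refine Submodule.subset_span ?_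
    rcases closure_range_rpowNatMul_subset r hf with rfl | ⟨n, rfl⟩
    · exact ⟨1, (mul_one _).symm⟩
    · exact ⟨1 * n * r, (rpowNatMul_mul r 1 n).symm⟩
  | zero => simp
  | add f g _ _ hf hg => rw [mul_add]; exact add_mem hf hg
  | smul c f _ hf => rw [mul_smul_comm]; exact Submodule.smul_mem _ c hf

lemma separatesPoints_adjoin_range_rpowNatMul (r : ℕ+) :
    (Algebra.adjoin ℝ (range (rpowNatMul r))).SeparatesPoints := by
  intro x y hxy
  refine ⟨rpowNatMul r 2, ⟨_, Algebra.subset_adjoin ⟨2, rfl⟩, rfl⟩, fun h => hxy ?_⟩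
  have hlog : Real.log ((2:ℕ+) * r) ≠ 0 := by
    refine (Real.log_pos ?_).ne'
    have : (1:ℝ) ≤ r := Nat.one_le_cast.2 r.pos
    push_cast
    linarith
  exact Subtype.ext (mul_right_cancel₀ hlog (Real.exp_injective h))

theorem dense_span_range_rpowNatMul (r : ℕ+) :
    Dense (Submodule.span ℝ (range (rpowNatMul r)) : Set C(Icc (0:ℝ) 1, ℝ)) := by
  set A := Algebra.adjoin ℝ (range (rpowNatMul r))
  have hA : Dense (A : Set C(Icc (0:ℝ) 1, ℝ)) :=
    ContinuousMap.continuousMap_mem_subalgebra_closure_of_separatesPoints A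
      (separatesPoints_adjoin_range_rpowNatMul r)
  have hu : IsUnit (rpowNatMul r 1) :=
    (ContinuousMap.isUnit_iff_forall_ne_zero _).2 fun x => (Real.exp_pos _).ne'
  have hsurj : Function.Surjective (rpowNatMul r 1 * ·) :=
    fun f => ⟨↑hu.unit⁻¹ * f, hu.unit.mul_inv_cancel_left f⟩
  refine Dense.mono ?_ (hsurj.denseRange.dense_image (continuous_const_mul _) hA)
  rintro _ ⟨f, hf, rfl⟩
  exact rpowNatMul_one_mul_mem_span hf

lemma eLpNorm_restrict_sub_le_dist {X E : Type*} [MeasurableSpace X] [TopologicalSpace X]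
    [NormedAddCommGroup E] {μ : Measure X} {s : Set X} [CompactSpace s] (hs : MeasurableSet s)
    [IsProbabilityMeasure (μ.restrict s)] (p : ENNReal) {f g : X → E} (F G : C(s, E))
    (hF : ∀ x : s, F x = f x) (hG : ∀ x : s, G x = g x) :
    eLpNorm (f - g) p (μ.restrict s) ≤ ENNReal.ofReal (dist F G) := by
  refine (eLpNorm_le_of_ae_bound (C := dist F G)
    ((ae_restrict_iff' hs).2 (ae_of_all _ fun x hx => ?_))).trans (by simp)
  calc ‖(f - g) x‖ = ‖(F - G) ⟨x, hx⟩‖ := by simp [hF, hG]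
    _ ≤ dist F G := (ContinuousMap.norm_coe_le_norm _ _).trans (dist_eq_norm _ _).ge

theorem stmt_10 (r : ℕ+) (g : ℝ → ℝ)
    (hg : MemLp g 2 (volume.restrict (Set.Icc (0:ℝ) 1)))
    (ε : ℝ) (hε : 0 < ε) :
    ∃ (k : ℕ) (c : Fin k → ℝ) (n : Fin k → ℕ+),
      eLpNorm (fun x => g x - ∑ i, c i * Real.exp (x * Real.log ((n i : ℝ) * (r : ℝ))))
          2 (volume.restrict (Set.Icc (0:ℝ) 1)) < ENNReal.ofReal ε := by
  set μ := volume.restrict (Icc (0:ℝ) 1)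
  have : IsProbabilityMeasure μ := ⟨by simp [μ]⟩
  obtain ⟨f, hgf, -⟩ := hg.exists_boundedContinuous_eLpNorm_sub_le ENNReal.ofNat_ne_top
    (ENNReal.ofReal_pos.2 (half_pos hε)).ne'
  obtain ⟨p, hp, hfp⟩ := (dense_span_range_rpowNatMul r).exists_dist_lt
    (f.toContinuousMap.restrict (Icc 0 1)) (half_pos hε)
  obtain ⟨k, c, n, rfl⟩ := Submodule.exists_fin_sum_eq_of_mem_span_range hp
  refine ⟨k, c, n, ?_⟩
  set d := dist (f.toContinuousMap.restrict (Icc 0 1)) (∑ i, c i • rpowNatMul r (n i))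
  set P := fun x : ℝ => ∑ i, c i * Real.exp (x * Real.log ((n i : ℝ) * (r : ℝ)))
  have hfP : eLpNorm (⇑f - P) 2 μ ≤ ENNReal.ofReal d :=
    eLpNorm_restrict_sub_le_dist measurableSet_Icc 2 _ _ (fun _ => rfl)
      (fun _ => by simp [P, rpowNatMul_apply])
  calc eLpNorm (g - P) 2 μ = eLpNorm ((g - ⇑f) + (⇑f - P)) 2 μ := by rw [sub_add_sub_cancel]
    _ ≤ eLpNorm (g - ⇑f) 2 μ + eLpNorm (⇑f - P) 2 μ :=
      eLpNorm_add_le (hg.1.sub f.continuous.aestronglyMeasurable)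
        (f.continuous.sub (by fun_prop)).aestronglyMeasurable one_le_two
    _ ≤ ENNReal.ofReal (ε / 2) + ENNReal.ofReal d := add_le_add hgf hfP
    _ < ENNReal.ofReal ε := by
      rw [← ENNReal.ofReal_add (half_pos hε).le dist_nonneg]
      exact (ENNReal.ofReal_lt_ofReal_iff hε).2 (by linarith)
end

section
/- For every positive integer r, the linear span of the functions x ↦ (n·r)^x, n ∈ ℕ⁺, is dense in C([0,1]) with the uniform norm. -/
/-!
Since `(n r)^x (m r)^x = (n m r · r)^x`, the span `S` of the functions is closed under
multiplication, i.e. a non-unital subalgebra of `C([0,1], ℝ)`. It contains the positive function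
`g = r^x`, and for such `g` the element `w = g / ‖g‖` satisfies `‖1 - w‖ < 1`; then
`1 - (1 - w)^k ∈ S` tends to `1`, so the closure of `S` is a unital closed subalgebra. As `(2r)^x`
separates points, Stone–Weierstrass makes it everything.
-/

open Set Filter Topology

namespace Submodule

variable {R A : Type*} [CommSemiring R] [Semiring A] [Algebra R A]

lemma mul_mem_span_of_mul_mem {s : Set A} (hs : ∀ x ∈ s, ∀ y ∈ s, x * y ∈ s)
    {a b : A} (ha : a ∈ span R s) (hb : b ∈ span R s) : a * b ∈ span R s :=
  span_mono (Set.mul_subset_iff.2 hs) (span_mul_span R s s ▸ mul_mem_mul ha hb)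

end Submodule

namespace NonUnitalSubalgebra

variable {R A : Type*} [CommRing R]

lemma one_sub_one_sub_pow_mem [Ring A] [Module R A] (S : NonUnitalSubalgebra R A) {w : A}
    (hw : w ∈ S) (k : ℕ) : 1 - (1 - w) ^ k ∈ S := by
  induction k with
  | zero => simp
  | succ k ih =>
    rw [show 1 - (1 - w) ^ (k + 1) = (1 - (1 - w) ^ k) - (1 - (1 - w) ^ k) * w + w by
      noncomm_ring]
    exact add_mem (sub_mem ih (mul_mem ih hw)) hw

lemma one_mem_closure_of_norm_one_sub_lt_one [NormedRing A] [Module R A]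
    (S : NonUnitalSubalgebra R A) {w : A} (hw : w ∈ S) (h : ‖1 - w‖ < 1) :
    (1 : A) ∈ closure (S : Set A) := by
  have hlim : Tendsto (fun k : ℕ => 1 - (1 - w) ^ k) atTop (𝓝 1) := by
    simpa using (tendsto_pow_atTop_nhds_zero_of_norm_lt_one h).const_sub 1
  exact mem_closure_of_tendsto hlim (Eventually.of_forall (S.one_sub_one_sub_pow_mem hw))

end NonUnitalSubalgebra

section StoneWeierstrass

variable {X : Type*} [TopologicalSpace X] [CompactSpace X]

lemma ContinuousMap.norm_one_sub_inv_norm_smul_lt_one {g : C(X, ℝ)} (hg : ∀ x, 0 < g x) :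
    ‖1 - ‖g‖⁻¹ • g‖ < 1 := by
  rw [ContinuousMap.norm_lt_iff _ one_pos]
  intro x
  have hle : g x ≤ ‖g‖ := (le_abs_self _).trans (g.norm_coe_le_norm x)
  have hnorm : 0 < ‖g‖ := (hg x).trans_le hle
  have hpos : 0 < ‖g‖⁻¹ * g x := mul_pos (inv_pos.2 hnorm) (hg x)
  have hle_one : ‖g‖⁻¹ * g x ≤ 1 := by rwa [inv_mul_le_iff₀ hnorm, mul_one]
  simp only [ContinuousMap.sub_apply, ContinuousMap.one_apply, ContinuousMap.smul_apply,
    smul_eq_mul, Real.norm_eq_abs, abs_lt]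
  constructor <;> linarith

theorem NonUnitalSubalgebra.topologicalClosure_eq_top_of_separatesPoints
    (S : NonUnitalSubalgebra ℝ C(X, ℝ)) (hsep : ((⇑) '' (S : Set C(X, ℝ))).SeparatesPoints)
    {g : C(X, ℝ)} (hgS : g ∈ S) (hg : ∀ x, 0 < g x) : S.topologicalClosure = ⊤ := by
  have h1 : (1 : C(X, ℝ)) ∈ S.topologicalClosure :=
    S.one_mem_closure_of_norm_one_sub_lt_one (SMulMemClass.smul_mem _ hgS)
      (g.norm_one_sub_inv_norm_smul_lt_one hg)
  let T := S.topologicalClosure.toSubmodule.toSubalgebra h1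
    fun _ _ hx hy => S.topologicalClosure.mul_mem hx hy
  have hT : T.topologicalClosure = ⊤ :=
    ContinuousMap.subalgebra_topologicalClosure_eq_top_of_separatesPoints T
      fun _ _ hxy => (hsep hxy).imp fun _ ⟨hf, hne⟩ =>
        ⟨image_mono S.le_topologicalClosure hf, hne⟩
  apply SetLike.coe_injective
  calc (S.topologicalClosure : Set C(X, ℝ)) = closure (T : Set C(X, ℝ)) :=
        S.isClosed_topologicalClosure.closure_eq.symm
    _ = _ := congrArg SetLike.coe hT

end StoneWeierstrass

noncomputable def scaledPow (r n : ℕ+) : C(Set.Icc (0 : ℝ) 1, ℝ) :=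
  ⟨fun x => Real.exp ((x : ℝ) * Real.log ((n : ℝ) * (r : ℝ))), by fun_prop⟩

lemma scaledPow_pos (r n : ℕ+) (x : Set.Icc (0 : ℝ) 1) : 0 < scaledPow r n x :=
  Real.exp_pos _

lemma scaledPow_mul (r n m : ℕ+) : scaledPow r n * scaledPow r m = scaledPow r (n * m * r) := by
  ext x
  have hn : (0 : ℝ) < n * r := by positivity
  have hm : (0 : ℝ) < m * r := by positivity
  simp only [scaledPow, ContinuousMap.mul_apply, ContinuousMap.coe_mk, ← Real.exp_add,
    ← mul_add, ← Real.log_mul hn.ne' hm.ne', PNat.mul_coe, Nat.cast_mul]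
  ring_nf

lemma scaledPow_two_injective (r : ℕ+) : Function.Injective (scaledPow r 2) := by
  intro x y hxy
  have hlog : Real.log ((2 : ℕ+) * r : ℝ) ≠ 0 := by
    have : (1 : ℝ) ≤ r := Nat.one_le_cast.2 r.pos
    exact (Real.log_pos (by push_cast; linarith)).ne'
  exact Subtype.ext (mul_right_cancel₀ hlog (Real.exp_injective hxy))

theorem stmt_11 (r : ℕ+) :
    closure ((Submodule.span ℝ (Set.range fun n : ℕ+ =>
        (ContinuousMap.mk (fun x : Set.Icc (0:ℝ) 1 =>
          Real.exp ((x : ℝ) * Real.log ((n : ℝ) * (r : ℝ)))) (by fun_prop)))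
        : Submodule ℝ C(Set.Icc (0:ℝ) 1, ℝ)) : Set C(Set.Icc (0:ℝ) 1, ℝ))
      = Set.univ := by
  change closure (Submodule.span ℝ (range (scaledPow r)) : Set C(Icc (0 : ℝ) 1, ℝ)) = univ
  have hmul : ∀ f ∈ range (scaledPow r), ∀ g ∈ range (scaledPow r),
      f * g ∈ range (scaledPow r) := by
    rintro _ ⟨n, rfl⟩ _ ⟨m, rfl⟩
    exact ⟨n * m * r, (scaledPow_mul r n m).symm⟩
  let S := (Submodule.span ℝ (range (scaledPow r))).toNonUnitalSubalgebra
    fun _ _ => Submodule.mul_mem_span_of_mul_mem hmul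
  have hsep : ((⇑) '' (S : Set C(Icc (0 : ℝ) 1, ℝ))).SeparatesPoints := fun x y hxy =>
    ⟨_, mem_image_of_mem _ (Submodule.subset_span (mem_range_self 2)),
      (scaledPow_two_injective r).ne hxy⟩
  exact congrArg SetLike.coe (S.topologicalClosure_eq_top_of_separatesPoints hsep
    (Submodule.subset_span (mem_range_self 1)) (scaledPow_pos r 1))
end

section
/- Let μ₁, μ₂ : [0,1] → ℝ be continuous. If ∫₀¹ (μ₁(α) - μ₂(α))·(n·N)^α dα = 0 for all positive integers n (with N a fixed positive integer), then μ₁ = μ₂ on [0,1]. -/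
/-!
Put `e α = (2N)^α`. Since `(2N)^(k+1) = nN` for `n = 2^(k+1) N^k`, the hypothesis says
that `f = (μ₁ - μ₂) e` is orthogonal on `[0,1]` to every power `e^k`, hence to every
polynomial in `e`. As `e` is injective, Stone–Weierstrass makes these polynomials uniformly
dense in `C([0,1])`, so `f` is orthogonal to itself; being continuous, it vanishes on `[0,1]`.
-/

open MeasureTheory Polynomial Set Filter Topology

theorem exists_polynomial_near_comp_of_injOn {α : Type*} [TopologicalSpace α] {s : Set α}
    (hs : IsCompact s) {e h : α → ℝ} (he : ContinuousOn e s) (he_inj : InjOn e s)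
    (hh : ContinuousOn h s) {ε : ℝ} (hε : 0 < ε) :
    ∃ q : ℝ[X], ∀ x ∈ s, |h x - q.eval (e x)| < ε := by
  have : CompactSpace s := isCompact_iff_compactSpace.mp hs
  let e' : C(s, ℝ) := ⟨s.domRestrict e, he.domRestrict⟩
  have hsep : (Algebra.adjoin ℝ {e'}).SeparatesPoints := fun x y hxy =>
    ⟨e', ⟨e', Algebra.subset_adjoin rfl, rfl⟩,
      fun hxy' => hxy (Subtype.ext (he_inj x.2 y.2 hxy'))⟩
  obtain ⟨⟨_, hq⟩, hnear⟩ :=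
    ContinuousMap.exists_mem_subalgebra_near_continuousMap_of_separatesPoints _ hsep
      ⟨s.domRestrict h, hh.domRestrict⟩ ε hε
  rw [Algebra.adjoin_singleton_eq_range_aeval] at hq
  obtain ⟨q, rfl⟩ := hq
  refine ⟨q, fun x hx => ?_⟩
  have := (ContinuousMap.norm_lt_iff _ hε).mp hnear ⟨x, hx⟩
  rw [abs_sub_comm]
  simpa [Polynomial.aeval_continuousMap_apply, e'] using this

section IntervalOrthogonality

variable {a b : ℝ} {f : ℝ → ℝ}

theorem intervalIntegral_mul_eq_zero_of_forall_approx (hab : a ≤ b)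
    (hf : ContinuousOn f (Icc a b)) {g : ℝ → ℝ} (hg : ContinuousOn g (Icc a b))
    (happrox : ∀ ε > 0, ∃ p : ℝ → ℝ, ContinuousOn p (Icc a b) ∧
      ∫ x in a..b, f x * p x = 0 ∧ ∀ x ∈ Icc a b, |g x - p x| ≤ ε) :
    ∫ x in a..b, f x * g x = 0 := by
  obtain ⟨M, hM⟩ := isCompact_Icc.exists_bound_of_continuousOn hf
  have hbound : ∀ ε > 0, |∫ x in a..b, f x * g x| ≤ M * ε * (b - a) := by
    intro ε hε
    obtain ⟨p, hp, hfp, hgp⟩ := happrox ε hε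
    have hsplit : ∫ x in a..b, f x * g x = ∫ x in a..b, f x * (g x - p x) := by
      have hfg : IntervalIntegrable (fun x => f x * g x) volume a b :=
        (hf.mul hg).intervalIntegrable_of_Icc hab
      have hfp' : IntervalIntegrable (fun x => f x * p x) volume a b :=
        (hf.mul hp).intervalIntegrable_of_Icc hab
      simp only [mul_sub]
      rw [intervalIntegral.integral_sub hfg hfp', hfp, sub_zero]
    rw [hsplit, ← Real.norm_eq_abs, ← abs_of_nonneg (sub_nonneg.mpr hab)]
    refine intervalIntegral.norm_integral_le_of_norm_le_const fun x hx => ?_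
    have hx' : x ∈ Icc a b := Ioc_subset_Icc_self (by rwa [uIoc_of_le hab] at hx)
    rw [norm_mul]
    exact mul_le_mul (hM x hx') (hgp x hx') (norm_nonneg _) ((norm_nonneg _).trans (hM x hx'))
  have hlim : Tendsto (fun ε => M * ε * (b - a)) (𝓝[>] 0) (𝓝 0) := by
    refine tendsto_nhdsWithin_of_tendsto_nhds ?_
    have hcont : Continuous fun ε : ℝ => M * ε * (b - a) := by fun_prop
    simpa using hcont.tendsto 0
  exact abs_nonpos_iff.mp <| ge_of_tendsto hlim <| eventually_nhdsWithin_of_forall hbound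

theorem eqOn_zero_of_intervalIntegral_sq_eq_zero (hab : a < b) (hf : ContinuousOn f (Icc a b))
    (h : ∫ x in a..b, f x ^ 2 = 0) : EqOn f 0 (Icc a b) := by
  have hint : IntervalIntegrable (fun x => f x ^ 2) volume a b :=
    (hf.pow 2).intervalIntegrable_of_Icc hab.le
  have hae : (fun x => f x ^ 2) =ᵐ[volume.restrict (Icc a b)] 0 := by
    rw [← Measure.restrict_congr_set Ioc_ae_eq_Icc,
      ← intervalIntegral.integral_eq_zero_iff_of_le_of_nonneg_ae hab.le
        (.of_forall fun x => sq_nonneg (f x)) hint]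
    exact h
  intro x hx
  exact pow_eq_zero_iff two_ne_zero |>.mp <|
    Measure.eqOn_Icc_of_ae_eq volume hab.ne hae (hf.pow 2) continuousOn_const hx

theorem intervalIntegral_mul_eval_comp_eq_zero {e : ℝ → ℝ}
    (hab : a ≤ b) (hf : ContinuousOn f (Icc a b)) (he : ContinuousOn e (Icc a b))
    (horth : ∀ k : ℕ, ∫ x in a..b, f x * e x ^ k = 0) (q : ℝ[X]) :
    ∫ x in a..b, f x * q.eval (e x) = 0 := by
  simp_rw [eval_eq_sum_range, Finset.mul_sum, mul_left_comm (f _)]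
  rw [intervalIntegral.integral_finsetSum fun i _ =>
    ContinuousOn.intervalIntegrable_of_Icc (u := fun x => q.coeff i * (f x * e x ^ i)) hab
      (continuousOn_const.mul (hf.mul (he.pow i)))]
  simp [intervalIntegral.integral_const_mul, horth]

theorem eqOn_zero_of_intervalIntegral_mul_pow_eq_zero {e : ℝ → ℝ} (hab : a < b)
    (hf : ContinuousOn f (Icc a b)) (he : ContinuousOn e (Icc a b))
    (he_inj : InjOn e (Icc a b)) (horth : ∀ k : ℕ, ∫ x in a..b, f x * e x ^ k = 0) :
    EqOn f 0 (Icc a b) := by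
  refine eqOn_zero_of_intervalIntegral_sq_eq_zero hab hf ?_
  simp_rw [sq]
  refine intervalIntegral_mul_eq_zero_of_forall_approx hab.le hf hf fun ε hε => ?_
  obtain ⟨q, hq⟩ := exists_polynomial_near_comp_of_injOn isCompact_Icc he he_inj hf hε
  exact ⟨fun x => q.eval (e x), q.continuous.comp_continuousOn he,
    intervalIntegral_mul_eval_comp_eq_zero hab.le hf he horth q, fun x hx => (hq x hx).le⟩

end IntervalOrthogonality

theorem stmt_12 (N : ℕ+) (μ₁ μ₂ : ℝ → ℝ)
    (h₁ : ContinuousOn μ₁ (Set.Icc 0 1)) (h₂ : ContinuousOn μ₂ (Set.Icc 0 1))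
    (horth : ∀ n : ℕ+,
      ∫ α in (0:ℝ)..1, (μ₁ α - μ₂ α) * Real.exp (α * Real.log ((n : ℝ) * (N : ℝ))) = 0) :
    Set.EqOn μ₁ μ₂ (Set.Icc 0 1) := by
  have hN : (1 : ℝ) ≤ N := mod_cast N.pos
  set e : ℝ → ℝ := fun α => Real.exp (α * Real.log (2 * N))
  have he : Continuous e := by fun_prop
  have he_mono : StrictMono e :=
    Real.exp_strictMono.comp (strictMono_mul_right_of_pos (Real.log_pos (by linarith)))
  have hpow (k : ℕ) (α : ℝ) :
      e α ^ k * e α = Real.exp (α * Real.log (((2 ^ (k + 1) * N ^ k : ℕ+) : ℝ) * N)) := by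
    have : (((2 ^ (k + 1) * N ^ k : ℕ+) : ℝ) * N) = (2 * N) ^ (k + 1) := by push_cast; ring
    rw [this, Real.log_pow, ← pow_succ, ← Real.exp_nat_mul]
    push_cast
    ring_nf
  have hzero : EqOn (fun α => (μ₁ α - μ₂ α) * e α) 0 (Icc 0 1) := by
    refine eqOn_zero_of_intervalIntegral_mul_pow_eq_zero zero_lt_one
      ((h₁.sub h₂).mul he.continuousOn) he.continuousOn he_mono.injective.injOn fun k => ?_
    simp_rw [mul_assoc, mul_comm (e _), hpow]
    exact horth _
  intro α hα
  exact sub_eq_zero.mp <| (mul_eq_zero.mp (hzero hα)).resolve_right (Real.exp_pos _).ne'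
end

section
/- Let h : [0,1] → ℝ be continuous and suppose ∫₀¹ e^{x·ln(rn)} h(x) dx = 0 for all positive integers n, where r is a fixed positive integer. Then h = 0. -/
open MeasureTheory intervalIntegral Set Polynomial

theorem stmt_13 (r : ℕ+) (h : ℝ → ℝ) (hc : ContinuousOn h (Set.Icc 0 1))
    (horth : ∀ n : ℕ+,
      ∫ x in (0:ℝ)..1, Real.exp (x * Real.log ((r : ℝ) * (n : ℝ))) * h x = 0) :
    Set.EqOn h 0 (Set.Icc 0 1) := by
  have hr1 : (1:ℝ) ≤ (r:ℝ) := by exact_mod_cast r.one_le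
  set a : ℝ := 2 * (r:ℝ) with ha
  have ha1 : 1 < a := by rw [ha]; nlinarith
  have hla : 0 < Real.log a := Real.log_pos ha1
  set φ : ℝ → ℝ := fun x => Real.exp (x * Real.log a) with hφ
  have hφcont : Continuous φ := by fun_prop
  set H : ℝ → ℝ := fun x => φ x * h x with hH
  have hHcont : ContinuousOn H (Set.Icc 0 1) := hφcont.continuousOn.mul hc
  have huIcc : Set.uIcc (0:ℝ) 1 = Set.Icc 0 1 := Set.uIcc_of_le zero_le_one
  -- orthogonality against powers of φ
  have key0 : ∀ k : ℕ, ∫ x in (0:ℝ)..1, φ x ^ k * H x = 0 := by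
    intro k
    have hn := horth ((2:ℕ+)^(k+1) * r^k)
    have hcast : ((((2:ℕ+)^(k+1) * r^k : ℕ+)) : ℝ) = 2^(k+1) * (r:ℝ)^k := by
      push_cast; ring
    have hra : (r:ℝ) * ((((2:ℕ+)^(k+1) * r^k : ℕ+)) : ℝ) = a^(k+1) := by
      rw [hcast, ha]; ring
    rw [hra] at hn
    have heq : ∀ x : ℝ, Real.exp (x * Real.log (a^(k+1))) * h x = φ x ^ k * H x := by
      intro x
      rw [Real.log_pow]
      have : x * ((k+1 : ℕ) * Real.log a) = (k+1 : ℕ) * (x * Real.log a) := by ring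
      rw [this, Real.exp_nat_mul]
      simp only [hφ, hH]
      ring
    rw [show (fun x => Real.exp (x * Real.log (a^(k+1))) * h x)
        = fun x => φ x ^ k * H x from funext heq] at hn
    exact hn
  -- integrability helper
  have hint : ∀ p : ℝ[X], IntervalIntegrable (fun x => p.eval (φ x) * H x) volume 0 1 := by
    intro p
    apply ContinuousOn.intervalIntegrable
    rw [huIcc]
    exact ((p.continuous.comp hφcont).continuousOn).mul hHcont
  -- orthogonality against polynomials in φ
  have keyP : ∀ p : ℝ[X], ∫ x in (0:ℝ)..1, p.eval (φ x) * H x = 0 := by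
    intro p
    induction p using Polynomial.induction_on' with
    | add p q hp hq =>
        have : (fun x => (p+q).eval (φ x) * H x)
            = fun x => p.eval (φ x) * H x + q.eval (φ x) * H x := by
          funext x; rw [Polynomial.eval_add]; ring
        rw [this, intervalIntegral.integral_add (hint p) (hint q), hp, hq, add_zero]
    | monomial n c =>
        have : (fun x => (Polynomial.monomial n c).eval (φ x) * H x)
            = fun x => c * (φ x ^ n * H x) := by
          funext x; rw [Polynomial.eval_monomial]; ring
        rw [this, intervalIntegral.integral_const_mul, key0 n, mul_zero]
  -- Stone–Weierstrass on X = Icc 0 1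
  set X := Set.Icc (0:ℝ) 1
  set φc : C(X, ℝ) := ⟨fun x => φ x, hφcont.comp continuous_subtype_val⟩ with hφc
  set Hc : C(X, ℝ) := ⟨fun x => H x, hHcont.restrict⟩ with hHcdef
  set A : Subalgebra ℝ C(X, ℝ) := Algebra.adjoin ℝ {φc} with hA
  have hsep : A.SeparatesPoints := by
    intro x y hxy
    refine ⟨φc, ⟨φc, Algebra.subset_adjoin (Set.mem_singleton _), rfl⟩, ?_⟩
    simp only [hφc, ContinuousMap.coe_mk]
    intro hcontra
    apply hxy
    have := Real.exp_injective hcontra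
    have hxy' : (x:ℝ) = (y:ℝ) := mul_right_cancel₀ hla.ne' this
    exact Subtype.ext hxy'
  -- ∫ g∘proj * H = 0 for g ∈ A
  have hmemA : ∀ g : C(X, ℝ), g ∈ A →
      ∫ x in (0:ℝ)..1, g (Set.projIcc 0 1 zero_le_one x) * H x = 0 := by
    intro g hg
    rw [hA, Algebra.adjoin_singleton_eq_range_aeval] at hg
    obtain ⟨p, rfl⟩ := hg
    have hcongr : Set.EqOn (fun x => (Polynomial.aeval φc p) (Set.projIcc 0 1 zero_le_one x) * H x)
        (fun x => p.eval (φ x) * H x) (Set.uIcc 0 1) := by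
      intro x hx
      rw [huIcc] at hx
      simp only [Set.projIcc_of_mem zero_le_one hx, Polynomial.aeval_continuousMap_apply]
      rfl
    simp only [AlgHom.toRingHom_eq_coe, RingHom.coe_coe]
    rw [intervalIntegral.integral_congr hcongr]
    exact keyP p
  -- the integral of H^2 vanishes
  have hH2 : ∫ x in (0:ℝ)..1, H x * H x = 0 := by
    have habs : ∀ ε > (0:ℝ), |∫ x in (0:ℝ)..1, H x * H x| ≤ ε := by
      intro ε hε
      set M := ‖Hc‖ with hM
      have hMnn : 0 ≤ M := norm_nonneg _
      have hδ : (0:ℝ) < ε / (M + 1) := by positivity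
      obtain ⟨g, hgnorm⟩ := ContinuousMap.exists_mem_subalgebra_near_continuousMap_of_separatesPoints
        A hsep Hc (ε / (M+1)) hδ
      have hzero := hmemA g g.2
      have hgc : Continuous fun x : ℝ => (g : C(X, ℝ)) (Set.projIcc 0 1 zero_le_one x) :=
        (g : C(X, ℝ)).continuous.comp continuous_projIcc
      have hint2 : IntervalIntegrable
          (fun x => (g : C(X, ℝ)) (Set.projIcc 0 1 zero_le_one x) * H x) volume 0 1 := by
        apply ContinuousOn.intervalIntegrable
        rw [huIcc]
        exact hgc.continuousOn.mul hHcont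
      have hintHH : IntervalIntegrable (fun x => H x * H x) volume 0 1 := by
        apply ContinuousOn.intervalIntegrable
        rw [huIcc]
        exact hHcont.mul hHcont
      have hsplit : ∫ x in (0:ℝ)..1, H x * H x
          = ∫ x in (0:ℝ)..1, (H x - (g : C(X, ℝ)) (Set.projIcc 0 1 zero_le_one x)) * H x := by
        have : (fun x => (H x - (g : C(X, ℝ)) (Set.projIcc 0 1 zero_le_one x)) * H x)
            = fun x => H x * H x - (g : C(X, ℝ)) (Set.projIcc 0 1 zero_le_one x) * H x := by
          funext x; ring
        rw [this, intervalIntegral.integral_sub hintHH hint2, hzero, sub_zero]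
      rw [hsplit, ← Real.norm_eq_abs]
      have hbound : ∀ x ∈ Set.uIoc (0:ℝ) 1,
          ‖(H x - (g : C(X, ℝ)) (Set.projIcc 0 1 zero_le_one x)) * H x‖ ≤ (ε / (M+1)) * M := by
        intro x hx
        have hx' : x ∈ X := by
          rw [Set.uIoc_of_le (zero_le_one : (0:ℝ) ≤ 1)] at hx
          exact Set.Ioc_subset_Icc_self hx
        rw [norm_mul]
        have h1 : ‖H x - (g : C(X, ℝ)) (Set.projIcc 0 1 zero_le_one x)‖ ≤ ε / (M+1) := by
          rw [Set.projIcc_of_mem zero_le_one hx']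
          have : H x = Hc ⟨x, hx'⟩ := rfl
          rw [this]
          calc ‖Hc ⟨x, hx'⟩ - (g : C(X, ℝ)) ⟨x, hx'⟩‖
              = ‖((g : C(X, ℝ)) - Hc) ⟨x, hx'⟩‖ := by rw [ContinuousMap.sub_apply, norm_sub_rev]
            _ ≤ ‖(g : C(X, ℝ)) - Hc‖ := ContinuousMap.norm_coe_le_norm _ _
            _ ≤ ε / (M+1) := le_of_lt hgnorm
        have h2 : ‖H x‖ ≤ M := by
          have : H x = Hc ⟨x, hx'⟩ := rfl
          rw [this, hM]
          exact ContinuousMap.norm_coe_le_norm Hc _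
        exact mul_le_mul h1 h2 (norm_nonneg _) (le_of_lt hδ)
      calc ‖∫ x in (0:ℝ)..1, (H x - (g : C(X, ℝ)) (Set.projIcc 0 1 zero_le_one x)) * H x‖
          ≤ (ε / (M+1)) * M * |1 - 0| :=
            intervalIntegral.norm_integral_le_of_norm_le_const hbound
        _ = (ε / (M+1)) * M := by norm_num
        _ ≤ ε := by
            rw [div_mul_eq_mul_div, div_le_iff₀ (by positivity)]
            nlinarith
    have : |∫ x in (0:ℝ)..1, H x * H x| ≤ 0 := by
      by_contra hcon
      push_neg at hcon
      have := habs (|∫ x in (0:ℝ)..1, H x * H x| / 2) (by linarith)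
      linarith
    have := abs_nonneg (∫ x in (0:ℝ)..1, H x * H x)
    exact abs_eq_zero.mp (le_antisymm ‹_› ‹_›)
  -- from vanishing integral of nonneg continuous function to H = 0 on Icc
  have hHHint : IntervalIntegrable (fun x => H x * H x) volume 0 1 := by
    apply ContinuousOn.intervalIntegrable
    rw [huIcc]
    exact hHcont.mul hHcont
  have hae : (fun x => H x * H x) =ᵐ[volume.restrict (Set.Ioc (0:ℝ) 1)] 0 := by
    rw [← intervalIntegral.integral_eq_zero_iff_of_le_of_nonneg_ae zero_le_one
      (Filter.Eventually.of_forall fun x => mul_self_nonneg _) hHHint]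
    exact hH2
  have hae' : (fun x => H x * H x) =ᵐ[volume.restrict (Set.Icc (0:ℝ) 1)] 0 := by
    rwa [← MeasureTheory.Measure.restrict_congr_set MeasureTheory.Ioc_ae_eq_Icc]
  have hEqOn : Set.EqOn (fun x => H x * H x) 0 (Set.Icc 0 1) := by
    apply MeasureTheory.Measure.eqOn_of_ae_eq hae' (hHcont.mul hHcont) continuousOn_const
    rw [interior_Icc, closure_Ioo (by norm_num : (0:ℝ) ≠ 1)]
  intro x hx
  have hHx : H x = 0 := by
    have := hEqOn hx
    simp only [Pi.zero_apply] at this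
    exact mul_self_eq_zero.mp this
  have hφpos : 0 < φ x := Real.exp_pos _
  have : φ x * h x = 0 := hHx
  simpa [Pi.zero_apply] using (mul_eq_zero.mp this).resolve_left hφpos.ne'
end
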